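/- There exists an operator 𝒜 : C⁰([0,T],H) → L^{p'}(I,H*) satisfying the C⁰-Bochner condition (M) that is not C⁰-Bochner pseudo-monotone. Concretely, let H be a separable infinite-dimensional Hilbert space with orthonormal basis (eₙ), R : H → H* the Riesz isomorphism, and (𝒜x)(t) := −R(x(t)). Then 𝒜 is weakly continuous (hence satisfies condition (M)), but the sequence xₙ ≡ eₙ satisfies xₙ ⇀ 0 in C⁰([0,T],H) and limsupₙ ⟨𝒜xₙ, xₙ − 0⟩_{L^p(I,H)} = −T < 0, while liminfₙ ⟨𝒜xₙ, xₙ − y⟩_{L^p(I,H)} = −T < 0 = ⟨𝒜0, 0 − y⟩_{L^p(I,H)} for every y ∈ L^p(I,H), so C⁰-Bochner pseudo-monotonicity fails. -/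

import Mathlib

open MeasureTheory ENNReal Filter

/-- Weak convergence of a sequence in a normed space, in terms of the continuous dual. -/
def WeakConv {E : Type*} [NormedAddCommGroup E] [NormedSpace ℝ E]
    (u : ℕ → E) (x : E) : Prop :=
  ∀ f : StrongDual ℝ E, Tendsto (fun n => f (u n)) atTop (nhds (f x))

/-! The operator is weakly continuous, so it satisfies (M) trivially. It fails pseudo-monotonicity
because `⟨𝒜xₙ, xₙ⟩ = -T‖eₙ‖² = -T` does not see the weak convergence `eₙ ⇀ 0`: the constant
sequences `xₙ ≡ eₙ` satisfy the hypothesis `limsup ⟨𝒜xₙ, xₙ - 0⟩ ≤ 0`, while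
`⟨𝒜xₙ, xₙ - y⟩ = -T + ⟪∫ y, eₙ⟫ → -T < 0 = ⟨𝒜0, 0 - y⟩` by Bessel's inequality. -/

open scoped InnerProductSpace

section WeakConv

variable {E F : Type*} [NormedAddCommGroup E] [NormedSpace ℝ E]
  [NormedAddCommGroup F] [NormedSpace ℝ F]

theorem WeakConv.map {u : ℕ → E} {x : E} (h : WeakConv u x) (L : E →L[ℝ] F) :
    WeakConv (fun n => L (u n)) (L x) :=
  fun f => h (f.comp L)

theorem WeakConv.tendsto_apply {u : ℕ → StrongDual ℝ E} {ξ : StrongDual ℝ E}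
    (h : WeakConv u ξ) (y : E) : Tendsto (fun n => u n y) atTop (nhds (ξ y)) :=
  h (ContinuousLinearMap.apply ℝ ℝ y)

end WeakConv

section Orthonormal

variable {H : Type*} [NormedAddCommGroup H] [InnerProductSpace ℝ H] {e : ℕ → H}

theorem Orthonormal.tendsto_inner_right (he : Orthonormal ℝ e) (z : H) :
    Tendsto (fun n => ⟪z, e n⟫_ℝ) atTop (nhds 0) := by
  have hsq : Tendsto (fun n => ‖⟪e n, z⟫_ℝ‖ ^ 2) atTop (nhds 0) :=
    (he.inner_products_summable z).tendsto_atTop_zero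
  have hnorm : Tendsto (fun n => ‖⟪e n, z⟫_ℝ‖) atTop (nhds 0) := by
    simpa only [Real.sqrt_sq (norm_nonneg _), Real.sqrt_zero] using hsq.sqrt
  simpa only [real_inner_comm] using tendsto_zero_iff_norm_tendsto_zero.2 hnorm

theorem Orthonormal.weakConv_zero [CompleteSpace H] (he : Orthonormal ℝ e) : WeakConv e 0 := by
  intro f
  obtain ⟨z, rfl⟩ := (InnerProductSpace.toDual ℝ H).surjective f
  simpa only [InnerProductSpace.toDual_apply_apply, inner_zero_right] using
    he.tendsto_inner_right z

end Orthonormal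

def ContinuousMap.constCLM (K H : Type*) [TopologicalSpace K] [CompactSpace K]
    [NormedAddCommGroup H] [NormedSpace ℝ H] : H →L[ℝ] C(K, H) where
  toFun := ContinuousMap.const K
  map_add' _ _ := rfl
  map_smul' _ _ := rfl
  cont := ContinuousMap.continuous_const'

section IntegralInner

variable {X K H : Type*} [TopologicalSpace K] [CompactSpace K]
  [NormedAddCommGroup H] [InnerProductSpace ℝ H] {φ : X → K} {y : X → H}

theorem norm_inner_comp_le (x : C(K, H)) (t : X) : ‖⟪x (φ t), y t⟫_ℝ‖ ≤ ‖y t‖ * ‖x‖ :=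
  (norm_inner_le_norm _ _).trans <| by
    rw [mul_comm]; gcongr; exact x.norm_coe_le_norm _

variable [MeasurableSpace X] [TopologicalSpace X] [OpensMeasurableSpace X]
  [SecondCountableTopology X] {μ : Measure X}

theorem integrable_inner_comp (hφ : Continuous φ) (hy : Integrable y μ) (x : C(K, H)) :
    Integrable (fun t => ⟪x (φ t), y t⟫_ℝ) μ :=
  (hy.norm.mul_const ‖x‖).mono'
    ((x.continuous.comp hφ).aestronglyMeasurable.inner hy.aestronglyMeasurable)
    (Eventually.of_forall (norm_inner_comp_le x))

/-- Testing against an integrable `y` is a continuous linear functional on `C(K, H)`,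
so it passes to weak limits. -/
theorem WeakConv.tendsto_integral_inner_comp (hφ : Continuous φ) (hy : Integrable y μ)
    {u : ℕ → C(K, H)} {x : C(K, H)} (hu : WeakConv u x) :
    Tendsto (fun n => ∫ t, ⟪u n (φ t), y t⟫_ℝ ∂μ) atTop (nhds (∫ t, ⟪x (φ t), y t⟫_ℝ ∂μ)) := by
  let pairing : C(K, H) →L[ℝ] ℝ := LinearMap.mkContinuous
    { toFun := fun x => ∫ t, ⟪x (φ t), y t⟫_ℝ ∂μ
      map_add' := fun a b => by
        simp only [ContinuousMap.add_apply, inner_add_left]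
        exact integral_add (integrable_inner_comp hφ hy a) (integrable_inner_comp hφ hy b)
      map_smul' := fun c a => by
        simp only [ContinuousMap.smul_apply, real_inner_smul_left, integral_const_mul]
        rfl }
    (∫ t, ‖y t‖ ∂μ)
    (fun x => by
      rw [← integral_mul_const]
      exact norm_integral_le_of_norm_le (hy.norm.mul_const _)
        (Eventually.of_forall (norm_inner_comp_le x)))
  exact hu pairing

end IntegralInner

theorem stmt_16_general {H : Type*} [NormedAddCommGroup H] [InnerProductSpace ℝ H] [CompleteSpace H]
    (e : ℕ → H) (he : Orthonormal ℝ e)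
    (T : ℝ) (hT : 0 < T) (p : ℝ≥0∞) [Fact (1 ≤ p)]
    (ι : C(Set.Icc (0:ℝ) T, H) →L[ℝ] Lp H p (volume.restrict (Set.Ioo 0 T)))
    (hι : ∀ y : C(Set.Icc (0:ℝ) T, H),
      (ι y : ℝ → H) =ᵐ[volume.restrict (Set.Ioo 0 T)]
        fun t => y (Set.projIcc 0 T hT.le t))
    (𝒜 : C(Set.Icc (0:ℝ) T, H) →
      StrongDual ℝ (Lp H p (volume.restrict (Set.Ioo 0 T))))
    (h𝒜 : ∀ (x : C(Set.Icc (0:ℝ) T, H)) (y : Lp H p (volume.restrict (Set.Ioo 0 T))),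
      𝒜 x y = -∫ t, (inner ℝ (x (Set.projIcc 0 T hT.le t)) (y t) : ℝ)
        ∂(volume.restrict (Set.Ioo 0 T))) :
    -- 𝒜 satisfies the C⁰-Bochner condition (M) (it is even weakly continuous)
    (∀ (u : ℕ → C(Set.Icc (0:ℝ) T, H)) (x : C(Set.Icc (0:ℝ) T, H))
        (ξ : StrongDual ℝ (Lp H p (volume.restrict (Set.Ioo 0 T)))),
      WeakConv u x → WeakConv (fun n => 𝒜 (u n)) ξ →
      limsup (fun n => 𝒜 (u n) (ι (u n))) atTop ≤ ξ (ι x) → 𝒜 x = ξ) ∧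
    -- the sequence xₙ ≡ eₙ converges weakly to 0 in C⁰([0,T],H)
    WeakConv (fun n => ContinuousMap.const (Set.Icc (0:ℝ) T) (e n))
      (0 : C(Set.Icc (0:ℝ) T, H)) ∧
    -- limsupₙ ⟨𝒜xₙ, xₙ − 0⟩ = −T < 0
    (limsup (fun n => 𝒜 (ContinuousMap.const (Set.Icc (0:ℝ) T) (e n))
        (ι (ContinuousMap.const (Set.Icc (0:ℝ) T) (e n)))) atTop = -T) ∧
    -- liminfₙ ⟨𝒜xₙ, xₙ − y⟩ = −T < 0 = ⟨𝒜0, 0 − y⟩ for every y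
    (∀ y : Lp H p (volume.restrict (Set.Ioo 0 T)),
      liminf (fun n => 𝒜 (ContinuousMap.const (Set.Icc (0:ℝ) T) (e n))
          (ι (ContinuousMap.const (Set.Icc (0:ℝ) T) (e n)) - y)) atTop = -T ∧
      𝒜 0 ((0 : Lp H p (volume.restrict (Set.Ioo 0 T))) - y) = 0) ∧
    -- hence 𝒜 is not C⁰-Bochner pseudo-monotone
    ¬ (∀ (u : ℕ → C(Set.Icc (0:ℝ) T, H)) (x : C(Set.Icc (0:ℝ) T, H)),
      WeakConv u x →
      limsup (fun n => 𝒜 (u n) (ι (u n) - ι x)) atTop ≤ 0 →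
      ∀ y : Lp H p (volume.restrict (Set.Ioo 0 T)),
        𝒜 x (ι x - y) ≤ liminf (fun n => 𝒜 (u n) (ι (u n) - y)) atTop) := by
  let μ := volume.restrict (Set.Ioo (0:ℝ) T)
  have hint (y : Lp H p μ) : Integrable y μ := (Lp.memLp y).integrable Fact.out
  have hA0 (y : Lp H p μ) : 𝒜 0 y = 0 := by simp [h𝒜]
  have hAconst (v : H) (y : Lp H p μ) : 𝒜 (ContinuousMap.const _ v) y = -⟪v, ∫ t, y t ∂μ⟫_ℝ := by
    rw [h𝒜, ← integral_inner (hint y)]; rfl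
  have hAself (n : ℕ) :
      𝒜 (ContinuousMap.const _ (e n)) (ι (ContinuousMap.const _ (e n))) = -T := by
    rw [hAconst, integral_congr_ae (hι _)]
    simp [real_inner_smul_right, he.1 n, hT.le]
  have hweak : WeakConv (fun n => ContinuousMap.const (Set.Icc (0:ℝ) T) (e n)) 0 := by
    have h := he.weakConv_zero.map (ContinuousMap.constCLM (Set.Icc (0:ℝ) T) H)
    rwa [map_zero] at h
  have htend (y : Lp H p μ) : Tendsto (fun n => 𝒜 (ContinuousMap.const _ (e n))
      (ι (ContinuousMap.const _ (e n)) - y)) atTop (nhds (-T)) := by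
    have hsplit (n : ℕ) : 𝒜 (ContinuousMap.const _ (e n)) (ι (ContinuousMap.const _ (e n)) - y) =
        -T + ⟪∫ t, y t ∂μ, e n⟫_ℝ := by
      rw [map_sub, hAself, hAconst, real_inner_comm]; ring
    simpa only [hsplit, add_zero] using
      tendsto_const_nhds.add (he.tendsto_inner_right (∫ t, y t ∂μ))
  refine ⟨fun u x ξ hu hξ _ => ?_, hweak, by simp only [hAself, limsup_const],
    fun y => ⟨(htend y).liminf_eq, hA0 _⟩, fun hPM => ?_⟩
  · ext y
    refine tendsto_nhds_unique ?_ (hξ.tendsto_apply y)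
    simpa only [h𝒜] using (hu.tendsto_integral_inner_comp continuous_projIcc (hint y)).neg
  · have h := hPM _ 0 hweak (by simp [hAself, hT.le]) 0
    rw [hA0, (htend 0).liminf_eq] at h
    linarith

/-- on a separable infinite-dimensional Hilbert space `H` with orthonormal
basis `(eₙ)`, the operator `𝒜 : C⁰([0,T],H) → (Lᵖ(I,H))*`, `⟨𝒜x, y⟩ = −∫_I (x(t), y(t))_H dt`
(i.e. `(𝒜x)(t) = −R(x(t))` with `R` the Riesz isomorphism), satisfies the `C⁰`-Bochner
condition (M) but is not `C⁰`-Bochner pseudo-monotone: the constant sequence `xₙ ≡ eₙ`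
converges weakly to `0` in `C⁰([0,T],H)`, `limsupₙ ⟨𝒜xₙ, xₙ − 0⟩ = −T < 0`, yet
`liminfₙ ⟨𝒜xₙ, xₙ − y⟩ = −T < 0 = ⟨𝒜0, 0 − y⟩` for every `y ∈ Lᵖ(I,H)`.
Here `ι : C⁰([0,T],H) → Lᵖ(I,H)` is the canonical inclusion. -/
theorem stmt_16 {H : Type*} [NormedAddCommGroup H] [InnerProductSpace ℝ H] [CompleteSpace H]
    [TopologicalSpace.SeparableSpace H] (hinf : ¬ FiniteDimensional ℝ H)
    (e : ℕ → H) (he : Orthonormal ℝ e)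
    (hbasis : (Submodule.span ℝ (Set.range e)).topologicalClosure = ⊤)
    (T : ℝ) (hT : 0 < T) (p : ℝ≥0∞) [Fact (1 ≤ p)] (hp : 1 < p) (hp' : p ≠ ∞)
    (ι : C(Set.Icc (0:ℝ) T, H) →L[ℝ] Lp H p (volume.restrict (Set.Ioo 0 T)))
    (hι : ∀ y : C(Set.Icc (0:ℝ) T, H),
      (ι y : ℝ → H) =ᵐ[volume.restrict (Set.Ioo 0 T)]
        fun t => y (Set.projIcc 0 T hT.le t))
    (𝒜 : C(Set.Icc (0:ℝ) T, H) →
      StrongDual ℝ (Lp H p (volume.restrict (Set.Ioo 0 T))))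
    (h𝒜 : ∀ (x : C(Set.Icc (0:ℝ) T, H)) (y : Lp H p (volume.restrict (Set.Ioo 0 T))),
      𝒜 x y = -∫ t, (inner ℝ (x (Set.projIcc 0 T hT.le t)) (y t) : ℝ)
        ∂(volume.restrict (Set.Ioo 0 T))) :
    -- 𝒜 satisfies the C⁰-Bochner condition (M) (it is even weakly continuous)
    (∀ (u : ℕ → C(Set.Icc (0:ℝ) T, H)) (x : C(Set.Icc (0:ℝ) T, H))
        (ξ : StrongDual ℝ (Lp H p (volume.restrict (Set.Ioo 0 T)))),
      WeakConv u x → WeakConv (fun n => 𝒜 (u n)) ξ →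
      limsup (fun n => 𝒜 (u n) (ι (u n))) atTop ≤ ξ (ι x) → 𝒜 x = ξ) ∧
    -- the sequence xₙ ≡ eₙ converges weakly to 0 in C⁰([0,T],H)
    WeakConv (fun n => ContinuousMap.const (Set.Icc (0:ℝ) T) (e n))
      (0 : C(Set.Icc (0:ℝ) T, H)) ∧
    -- limsupₙ ⟨𝒜xₙ, xₙ − 0⟩ = −T < 0
    (limsup (fun n => 𝒜 (ContinuousMap.const (Set.Icc (0:ℝ) T) (e n))
        (ι (ContinuousMap.const (Set.Icc (0:ℝ) T) (e n)))) atTop = -T) ∧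
    -- liminfₙ ⟨𝒜xₙ, xₙ − y⟩ = −T < 0 = ⟨𝒜0, 0 − y⟩ for every y
    (∀ y : Lp H p (volume.restrict (Set.Ioo 0 T)),
      liminf (fun n => 𝒜 (ContinuousMap.const (Set.Icc (0:ℝ) T) (e n))
          (ι (ContinuousMap.const (Set.Icc (0:ℝ) T) (e n)) - y)) atTop = -T ∧
      𝒜 0 ((0 : Lp H p (volume.restrict (Set.Ioo 0 T))) - y) = 0) ∧
    -- hence 𝒜 is not C⁰-Bochner pseudo-monotone
    ¬ (∀ (u : ℕ → C(Set.Icc (0:ℝ) T, H)) (x : C(Set.Icc (0:ℝ) T, H)),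
      WeakConv u x →
      limsup (fun n => 𝒜 (u n) (ι (u n) - ι x)) atTop ≤ 0 →
      ∀ y : Lp H p (volume.restrict (Set.Ioo 0 T)),
        𝒜 x (ι x - y) ≤ liminf (fun n => 𝒜 (u n) (ι (u n) - y)) atTop) :=
  stmt_16_general e he T hT p ι hι 𝒜 h𝒜
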